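/- Let k ≥ 1 and let G be the bi-directional ring of size n ≥ 3 with a marked k-tuple ḡ of pairwise distinct vertices (k ≤ n). For an unmarked vertex v, let r(v) and l(v) be the first marked vertices in the sequences v+1, v+2, … and v−1, v−2, …, respectively (arithmetic in ZMod n). Then for every d ≥ 1 and every unmarked vertex v, μ_d(v) = { List.destutter (· ≠ ·) [μ_{d−1}(v), μ_{d−1}(r(v))], List.destutter (· ≠ ·) [μ_{d−1}(v), μ_{d−1}(l(v))] }; any two unmarked vertices u, v with r(u) = r(v) and l(u) = l(v) satisfy μ_d(u) = μ_d(v) for all d ≥ 0; and for every d the number of ∼_d-equivalence classes is at most 2k. -/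

import Mathlib

/-! Markings of topologies with a marked k-tuple, following the paper's
`d`-contraction construction. -/

noncomputable def dst {α : Type} (l : List α) : List α :=
  @List.destutter α (· ≠ ·) (fun _ _ => Classical.dec _) l

/-- A topology: a finite nonempty directed graph with no self-loops. -/
structure Topo where
  V : Type
  fintypeV : Fintype V
  decEqV : DecidableEq V
  nonemptyV : Nonempty V
  E : V → V → Prop
  no_self_loops : ∀ v, ¬ E v v

attribute [instance] Topo.fintypeV Topo.decEqV Topo.nonemptyV

/-- `Mark k d`: the type of `d`-th markings (independent of the topology). -/
def Mark (k : ℕ) : ℕ → Type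
  | 0 => Finset (Fin k)
  | d + 1 => Set (List (Mark k d))

def Mark.toSet {k d : ℕ} (m : Mark k (d + 1)) : Set (List (Mark k d)) := m

/-- The labeling `Λ`: `Λ (g i) = {i}` and `Λ v = ∅` for unmarked `v`
(for injective `g`). -/
def lab {k : ℕ} (G : Topo) (g : Fin k → G.V) (v : G.V) : Finset (Fin k) :=
  Finset.univ.filter fun i => g i = v

/-- `InX G g v π`: `π` is a directed path starting at `v`, ending at a marked
vertex, with all non-final vertices unmarked.  (The set `X(v)` of the paper.) -/
def InX {k : ℕ} (G : Topo) (g : Fin k → G.V) (v : G.V) (π : List G.V) : Prop :=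
  π ≠ [] ∧ π.head? = some v ∧ List.Chain' G.E π ∧
    (∀ u ∈ π.dropLast, u ∉ Set.range g) ∧
    ∃ w ∈ Set.range g, π.getLast? = some w

/-- The `d`-th marking `μ_d`. -/
noncomputable def mu {k : ℕ} (G : Topo) (g : Fin k → G.V) : (d : ℕ) → G.V → Mark k d
  | 0, v => lab G g v
  | d + 1, v => { s : List (Mark k d) | ∃ π : List G.V, InX G g v π ∧ s = dst (π.map (mu G g d)) }

/-- The bi-directional ring of size `n ≥ 3`: vertices `ZMod n`, edges
`(i, i+1)` and `(i, i-1)`. -/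
def biRing (n : ℕ) (hn : 3 ≤ n) : Topo :=
  haveI : NeZero n := ⟨by omega⟩
  haveI : Fact (1 < n) := ⟨by omega⟩
  { V := ZMod n
    fintypeV := inferInstance
    decEqV := inferInstance
    nonemptyV := inferInstance
    E := fun i j => j = i + 1 ∨ j = i - 1
    no_self_loops := by
      intro v h
      rcases h with h | h
      · exact one_ne_zero (left_eq_add.mp h)
      · rw [sub_eq_add_neg] at h
        exact one_ne_zero (neg_eq_zero.mp (left_eq_add.mp h)) }

/-- `firstMarkedFwd g v w`: `w` is the first marked vertex in the sequence
`v+1, v+2, …`. -/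
def firstMarkedFwd {k : ℕ} (n : ℕ) (g : Fin k → ZMod n) (v w : ZMod n) : Prop :=
  ∃ j : ℕ, 1 ≤ j ∧ w = v + (j : ZMod n) ∧ w ∈ Set.range g ∧
    ∀ i : ℕ, 1 ≤ i → i < j → (v + (i : ZMod n)) ∉ Set.range g

/-- `firstMarkedBwd g v w`: `w` is the first marked vertex in the sequence
`v-1, v-2, …`. -/
def firstMarkedBwd {k : ℕ} (n : ℕ) (g : Fin k → ZMod n) (v w : ZMod n) : Prop :=
  ∃ j : ℕ, 1 ≤ j ∧ w = v - (j : ZMod n) ∧ w ∈ Set.range g ∧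
    ∀ i : ℕ, 1 ≤ i → i < j → (v - (i : ZMod n)) ∉ Set.range g

/-! The unmarked vertices of the ring split into arcs, each lying between two consecutive marked
vertices; `r` and `l` are constant on an arc, and `r` alone already determines it. An `X`-path
from an unmarked `v` stays inside the arc of `v` until it steps out through `r v` or `l v`. By
induction on `d`, all vertices of an arc carry the same marking, so such a path contracts to
`[μ_d v, μ_d (r v)]` or `[μ_d v, μ_d (l v)]`, and both occur. Hence at most `k` markings come from
marked vertices and at most `k` from arcs. -/

section Destutter

variable {α : Type}

theorem dst_cons_cons (a : α) (t : List α) : dst (a :: a :: t) = dst (a :: t) := by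
  simp only [dst, List.destutter_cons', List.destutter'_cons_neg, ne_eq, not_true_eq_false,
    not_false_eq_true]

theorem dst_cons_append_singleton {a : α} (b : α) {t : List α} (ht : ∀ x ∈ t, x = a) :
    dst (a :: t ++ [b]) = dst [a, b] := by
  induction t with
  | nil => rfl
  | cons x t ih =>
    obtain rfl := ht x List.mem_cons_self
    rw [List.cons_append, List.cons_append, dst_cons_cons, ← List.cons_append]
    exact ih fun y hy => ht y (List.mem_cons_of_mem x hy)

theorem dst_map_eq_of_forall_dropLast {β : Type} (f : β → α) {π : List β} {v w : β}
    (hhead : π.head? = some v) (hlast : π.getLast? = some w)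
    (hconst : ∀ u ∈ π.dropLast, f u = f v) :
    dst (π.map f) = dst [f v, f w] := by
  obtain ⟨rest, rfl⟩ : ∃ rest, π = v :: rest := by
    cases π with
    | nil => cases hhead
    | cons x rest => exact ⟨rest, by rw [Option.some.inj hhead]⟩
  rcases List.eq_nil_or_concat rest with rfl | ⟨t, w', rfl⟩
  · obtain rfl : v = w := Option.some.inj hlast
    exact (dst_cons_cons (f v) []).symm
  · rw [List.concat_eq_append] at hlast hconst ⊢
    obtain rfl : w = w' := by
      rw [← List.cons_append, List.getLast?_concat] at hlast
      exact (Option.some.inj hlast).symm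
    rw [List.map_cons, List.map_append, List.map_singleton]
    refine dst_cons_append_singleton (f w) fun x hx => ?_
    obtain ⟨u, hu, rfl⟩ := List.mem_map.mp hx
    refine hconst u ?_
    rw [← List.cons_append, List.dropLast_concat]
    exact List.mem_cons_of_mem v hu

end Destutter

section Topology

variable {k : ℕ} {G : Topo} {g : Fin k → G.V}

theorem lab_eq_empty {v : G.V} (hv : v ∉ Set.range g) : lab G g v = ∅ :=
  Finset.filter_eq_empty_iff.2 fun i _ h => hv ⟨i, h⟩

theorem toSet_mu_succ (d : ℕ) (v : G.V) :
    Mark.toSet (mu G g (d + 1) v) = {s | ∃ π, InX G g v π ∧ s = dst (π.map (mu G g d))} :=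
  rfl

theorem InX.forall_dropLast_and_exists_getLast {P T : G.V → Prop}
    (hP : ∀ u, P u → u ∉ Set.range g)
    (hstay : ∀ u w, P u → G.E u w → w ∉ Set.range g → P w)
    (hexit : ∀ u w, P u → G.E u w → w ∈ Set.range g → T w)
    {v : G.V} {π : List G.V} (hv : P v) (hπ : InX G g v π) :
    (∀ u ∈ π.dropLast, P u) ∧ ∃ w, T w ∧ π.getLast? = some w := by
  induction π generalizing v with
  | nil => exact absurd rfl hπ.1
  | cons x rest ih =>
    obtain ⟨-, hhead, hchain, hunm, w, hw, hlast⟩ := hπ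
    obtain rfl : x = v := Option.some.inj hhead
    cases rest with
    | nil =>
      obtain rfl : x = w := Option.some.inj hlast
      exact absurd hw (hP x hv)
    | cons y rest =>
      obtain ⟨hxy, hchain⟩ := List.isChain_cons_cons.mp hchain
      rw [List.dropLast_cons_cons] at hunm ⊢
      by_cases hy : y ∈ Set.range g
      · cases rest with
        | cons z rest => exact absurd hy (hunm y (by simp))
        | nil => exact ⟨by simpa using hv, y, hexit x y hv hxy hy, rfl⟩
      · have hπy : InX G g y (y :: rest) :=
          ⟨List.cons_ne_nil _ _, rfl, hchain, fun u hu => hunm u (List.mem_cons_of_mem x hu),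
            w, hw, hlast⟩
        obtain ⟨hdrop, hend⟩ := ih (hstay x y hv hxy hy) hπy
        exact ⟨List.forall_mem_cons.mpr ⟨hv, hdrop⟩, hend⟩

theorem inX_map_range {p : ℕ → G.V} {j : ℕ}
    (hstep : ∀ i < j, G.E (p i) (p (i + 1))) (hunm : ∀ i < j, p i ∉ Set.range g)
    (hmark : p j ∈ Set.range g) :
    InX G g (p 0) ((List.range (j + 1)).map p) := by
  refine ⟨by simp, by simp [List.head?_range], ?_, ?_, p j, hmark, by simp [List.getLast?_range]⟩
  · exact (List.isChain_map _).mpr ((List.isChain_range_succ _ _).mpr hstep)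
  · rw [← List.map_dropLast, List.range_succ, List.dropLast_concat]
    simpa using hunm

end Topology

section Ring

variable {k n : ℕ} {g : Fin k → ZMod n}

theorem firstMarkedFwd.unique {v w w' : ZMod n} (h : firstMarkedFwd n g v w)
    (h' : firstMarkedFwd n g v w') : w = w' := by
  obtain ⟨j, hj, rfl, hm, hmin⟩ := h
  obtain ⟨j', hj', rfl, hm', hmin'⟩ := h'
  rcases lt_trichotomy j j' with h | rfl | h
  · exact absurd hm (hmin' j hj h)
  · rfl
  · exact absurd hm' (hmin j' hj' h)

theorem firstMarkedBwd.unique {v w w' : ZMod n} (h : firstMarkedBwd n g v w)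
    (h' : firstMarkedBwd n g v w') : w = w' := by
  obtain ⟨j, hj, rfl, hm, hmin⟩ := h
  obtain ⟨j', hj', rfl, hm', hmin'⟩ := h'
  rcases lt_trichotomy j j' with h | rfl | h
  · exact absurd hm (hmin' j hj h)
  · rfl
  · exact absurd hm' (hmin j' hj' h)

theorem firstMarkedFwd_of_add_one_mem {a : ZMod n} (ha : a + 1 ∈ Set.range g) :
    firstMarkedFwd n g a (a + 1) :=
  ⟨1, le_rfl, by rw [Nat.cast_one], ha, fun _ hi hi' => absurd hi' (by omega)⟩

theorem firstMarkedBwd_of_sub_one_mem {a : ZMod n} (ha : a - 1 ∈ Set.range g) :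
    firstMarkedBwd n g a (a - 1) :=
  ⟨1, le_rfl, by rw [Nat.cast_one], ha, fun _ hi hi' => absurd hi' (by omega)⟩

theorem firstMarkedFwd.add_one {a w : ZMod n} (h : firstMarkedFwd n g a w)
    (ha : a + 1 ∉ Set.range g) : firstMarkedFwd n g (a + 1) w := by
  obtain ⟨j, hj, rfl, hm, hmin⟩ := h
  have hj2 : 2 ≤ j := by
    by_contra! hj2
    obtain rfl : j = 1 := by omega
    exact ha (by simpa using hm)
  refine ⟨j - 1, by omega, ?_, hm, fun i hi hij => ?_⟩
  · rw [Nat.cast_sub (by omega : 1 ≤ j)]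
    ring
  · have := hmin (i + 1) (by omega) (by omega)
    rwa [Nat.cast_succ, add_comm (i : ZMod n), ← add_assoc] at this

theorem firstMarkedBwd.add_one {a w : ZMod n} (h : firstMarkedBwd n g a w)
    (ha : a ∉ Set.range g) : firstMarkedBwd n g (a + 1) w := by
  obtain ⟨j, hj, rfl, hm, hmin⟩ := h
  refine ⟨j + 1, by omega, by push_cast; ring, hm, fun i hi hij => ?_⟩
  obtain rfl | hi2 := eq_or_lt_of_le hi
  · simpa using ha
  · have := hmin (i - 1) (by omega) (by omega)
    rwa [Nat.cast_sub hi, Nat.cast_one, sub_sub_eq_add_sub] at this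

variable {r l : ZMod n → ZMod n}
variable (hr : ∀ v : ZMod n, v ∉ Set.range g → firstMarkedFwd n g v (r v))
variable (hl : ∀ v : ZMod n, v ∉ Set.range g → firstMarkedBwd n g v (l v))

include hr in
theorem r_add_one_eq {a : ZMod n} (ha : a ∉ Set.range g) (ha1 : a + 1 ∉ Set.range g) :
    r (a + 1) = r a :=
  (hr (a + 1) ha1).unique ((hr a ha).add_one ha1)

include hl in
theorem l_add_one_eq {a : ZMod n} (ha : a ∉ Set.range g) (ha1 : a + 1 ∉ Set.range g) :
    l (a + 1) = l a :=
  (hl (a + 1) ha1).unique ((hl a ha).add_one ha)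

include hl in
theorem l_add_natCast_eq {v : ZMod n} (m : ℕ) (hunm : ∀ i ≤ m, v + (i : ZMod n) ∉ Set.range g) :
    l (v + m) = l v := by
  induction m with
  | zero => rw [Nat.cast_zero, add_zero]
  | succ m ih =>
    have hm1 := hunm (m + 1) le_rfl
    rw [Nat.cast_succ, ← add_assoc] at hm1 ⊢
    rw [l_add_one_eq hl (hunm m (by omega)) hm1, ih fun i hi => hunm i (by omega)]

include hr hl in
theorem l_eq_of_r_eq {u v : ZMod n} (hu : u ∉ Set.range g) (hv : v ∉ Set.range g)
    (h : r u = r v) : l u = l v := by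
  obtain ⟨j, hj, hju, -, hminu⟩ := hr u hu
  obtain ⟨m, hm, hmv, -, hminv⟩ := hr v hv
  wlog hmj : m ≤ j generalizing u v j m
  · exact (this hv hu h.symm m hm hmv hminv j hj hju hminu (by omega)).symm
  have huv : u + j = v + m := hju.symm.trans (h.trans hmv)
  have hvu : v = u + ((j - m : ℕ) : ZMod n) := by
    rw [Nat.cast_sub hmj]
    linear_combination -huv
  rw [hvu, l_add_natCast_eq hl _ fun i hi => ?_]
  obtain rfl | hi0 := Nat.eq_zero_or_pos i
  · simpa using hu
  · exact hminu i hi0 (by omega)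

variable (hn : 3 ≤ n)

include hr hl in
theorem ends_eq_of_adj {u w : ZMod n} (hu : u ∉ Set.range g) (hw : w ∉ Set.range g)
    (huw : (biRing n hn).E u w) : r w = r u ∧ l w = l u := by
  rcases huw with rfl | rfl
  · exact ⟨r_add_one_eq hr hu hw, l_add_one_eq hl hu hw⟩
  · have hu' : u - 1 + 1 ∉ Set.range g := by rwa [sub_add_cancel]
    have hr' := r_add_one_eq hr hw hu'
    have hl' := l_add_one_eq hl hw hu'
    rw [sub_add_cancel] at hr' hl'
    exact ⟨hr'.symm, hl'.symm⟩

include hr hl in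
theorem mem_ends_of_adj {u w : ZMod n} (hu : u ∉ Set.range g) (hw : w ∈ Set.range g)
    (huw : (biRing n hn).E u w) : w = r u ∨ w = l u := by
  rcases huw with rfl | rfl
  · exact Or.inl ((firstMarkedFwd_of_add_one_mem hw).unique (hr u hu))
  · exact Or.inr ((firstMarkedBwd_of_sub_one_mem hw).unique (hl u hu))

include hr hl in
theorem InX.biRing_dropLast_and_getLast {v : ZMod n} {π : List (ZMod n)}
    (hv : v ∉ Set.range g) (hπ : InX (biRing n hn) g v π) :
    (∀ u ∈ π.dropLast, u ∉ Set.range g ∧ r u = r v ∧ l u = l v) ∧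
      (π.getLast? = some (r v) ∨ π.getLast? = some (l v)) := by
  obtain ⟨hdrop, w, hw, hlast⟩ := InX.forall_dropLast_and_exists_getLast (G := biRing n hn)
    (P := fun u : ZMod n => u ∉ Set.range g ∧ r u = r v ∧ l u = l v)
    (T := fun w : ZMod n => w = r v ∨ w = l v)
    (fun _ hu => hu.1)
    (fun u w ⟨hu, hru, hlu⟩ huw hw =>
      ⟨hw, by rw [(ends_eq_of_adj hr hl hn hu hw huw).1, hru],
        by rw [(ends_eq_of_adj hr hl hn hu hw huw).2, hlu]⟩)
    (fun u w ⟨hu, hru, hlu⟩ huw hw => by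
      rw [← hru, ← hlu]
      exact mem_ends_of_adj hr hl hn hu hw huw)
    ⟨hv, rfl, rfl⟩ hπ
  refine ⟨hdrop, hw.imp ?_ ?_⟩ <;> exact fun h => h ▸ hlast

include hr in
theorem exists_inX_biRing_getLast_eq_r {v : ZMod n} (hv : v ∉ Set.range g) :
    ∃ π : List (ZMod n), InX (biRing n hn) g v π ∧ π.getLast? = some (r v) := by
  obtain ⟨j, -, hw, hm, hmin⟩ := hr v hv
  refine ⟨(List.range (j + 1)).map fun i : ℕ => v + (i : ZMod n), ?_, by
    rw [hw, List.getLast?_map, List.getLast?_range]; rfl⟩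
  have hπ := inX_map_range (G := biRing n hn) (p := fun i : ℕ => v + (i : ZMod n)) (j := j)
    (fun i _ => Or.inl (by push_cast; ring)) (fun i hi => ?_) (hw ▸ hm)
  · simp only [Nat.cast_zero, add_zero] at hπ
    exact hπ
  · obtain rfl | hi0 := Nat.eq_zero_or_pos i
    · rwa [Nat.cast_zero, add_zero]
    · exact hmin i hi0 hi

include hl in
theorem exists_inX_biRing_getLast_eq_l {v : ZMod n} (hv : v ∉ Set.range g) :
    ∃ π : List (ZMod n), InX (biRing n hn) g v π ∧ π.getLast? = some (l v) := by
  obtain ⟨j, -, hw, hm, hmin⟩ := hl v hv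
  refine ⟨(List.range (j + 1)).map fun i : ℕ => v - (i : ZMod n), ?_, by
    rw [hw, List.getLast?_map, List.getLast?_range]; rfl⟩
  have hπ := inX_map_range (G := biRing n hn) (p := fun i : ℕ => v - (i : ZMod n)) (j := j)
    (fun i _ => Or.inr (by push_cast; ring)) (fun i hi => ?_) (hw ▸ hm)
  · simp only [Nat.cast_zero, sub_zero] at hπ
    exact hπ
  · obtain rfl | hi0 := Nat.eq_zero_or_pos i
    · rwa [Nat.cast_zero, sub_zero]
    · exact hmin i hi0 hi

include hr hl in
theorem dst_map_mu_biRing_of_inX {d : ℕ}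
    (hconst : ∀ u v : ZMod n, u ∉ Set.range g → v ∉ Set.range g → r u = r v → l u = l v →
      mu (biRing n hn) g d u = mu (biRing n hn) g d v)
    {v w : ZMod n} {π : List (ZMod n)} (hv : v ∉ Set.range g) (hπ : InX (biRing n hn) g v π)
    (hlast : π.getLast? = some w) :
    dst (π.map (mu (biRing n hn) g d)) = dst [mu (biRing n hn) g d v, mu (biRing n hn) g d w] :=
  dst_map_eq_of_forall_dropLast _ hπ.2.1 hlast fun u hu =>
    have ⟨hu, hru, hlu⟩ := (hπ.biRing_dropLast_and_getLast hr hl hn hv).1 u hu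
    hconst u v hu hv hru hlu

include hr hl in
theorem toSet_mu_succ_biRing {d : ℕ}
    (hconst : ∀ u v : ZMod n, u ∉ Set.range g → v ∉ Set.range g → r u = r v → l u = l v →
      mu (biRing n hn) g d u = mu (biRing n hn) g d v)
    {v : ZMod n} (hv : v ∉ Set.range g) :
    Mark.toSet (mu (biRing n hn) g (d + 1) v) =
      {dst [mu (biRing n hn) g d v, mu (biRing n hn) g d (r v)],
       dst [mu (biRing n hn) g d v, mu (biRing n hn) g d (l v)]} := by
  refine (toSet_mu_succ (G := biRing n hn) (g := g) d v).trans (Set.ext fun s => ⟨?_, ?_⟩)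
  · rintro ⟨π, hπ, rfl⟩
    exact (hπ.biRing_dropLast_and_getLast hr hl hn hv).2.imp
      (dst_map_mu_biRing_of_inX hr hl hn hconst hv hπ)
      (dst_map_mu_biRing_of_inX hr hl hn hconst hv hπ)
  · rintro (rfl | rfl)
    · obtain ⟨π, hπ, hlast⟩ := exists_inX_biRing_getLast_eq_r hr hn hv
      exact ⟨π, hπ, (dst_map_mu_biRing_of_inX hr hl hn hconst hv hπ hlast).symm⟩
    · obtain ⟨π, hπ, hlast⟩ := exists_inX_biRing_getLast_eq_l hl hn hv
      exact ⟨π, hπ, (dst_map_mu_biRing_of_inX hr hl hn hconst hv hπ hlast).symm⟩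

include hr hl in
theorem mu_biRing_eq_of_ends_eq (d : ℕ) :
    ∀ u v : ZMod n, u ∉ Set.range g → v ∉ Set.range g → r u = r v → l u = l v →
      mu (biRing n hn) g d u = mu (biRing n hn) g d v := by
  induction d with
  | zero =>
    intro u v hu hv _ _
    exact (lab_eq_empty hu).trans (lab_eq_empty hv).symm
  | succ d ih =>
    intro u v hu hv hruv hluv
    have h := toSet_mu_succ_biRing hr hl hn ih hu
    rw [ih u v hu hv hruv hluv, hruv, hluv, ← toSet_mu_succ_biRing hr hl hn ih hv] at h
    exact h

include hr hl in
theorem ncard_range_mu_biRing_le (d : ℕ) :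
    (Set.range (mu (biRing n hn) g d)).ncard ≤ 2 * k := by
  set μ := mu (biRing n hn) g d
  set pick := Function.invFunOn r (Set.range g)ᶜ
  have hsub : Set.range μ ⊆ Set.range (μ ∘ g) ∪ Set.range (μ ∘ pick ∘ g) := by
    rintro _ ⟨v, rfl⟩
    by_cases hv : v ∈ Set.range g
    · obtain ⟨i, rfl⟩ := hv
      exact Or.inl ⟨i, rfl⟩
    · obtain ⟨-, -, -, ⟨i, hi⟩, -⟩ := hr v hv
      have hex : ∃ a ∈ (Set.range g)ᶜ, r a = r v := ⟨v, hv, rfl⟩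
      have hpick := Function.invFunOn_eq hex
      refine Or.inr ⟨i, ?_⟩
      change μ (pick (g i)) = μ v
      rw [hi]
      exact mu_biRing_eq_of_ends_eq hr hl hn d _ v (Function.invFunOn_mem hex) hv hpick
        (l_eq_of_r_eq hr hl (Function.invFunOn_mem hex) hv hpick)
  have hcard (f : Fin k → Mark k d) : (Set.range f).ncard ≤ k := by
    rw [← Nat.card_coe_set_eq]
    simpa using Finite.card_range_le f
  calc (Set.range μ).ncard
      ≤ (Set.range (μ ∘ g) ∪ Set.range (μ ∘ pick ∘ g)).ncard :=
        Set.ncard_le_ncard hsub ((Set.finite_range _).union (Set.finite_range _))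
    _ ≤ (Set.range (μ ∘ g)).ncard + (Set.range (μ ∘ pick ∘ g)).ncard := Set.ncard_union_le _ _
    _ ≤ 2 * k := by linarith [hcard (μ ∘ g), hcard (μ ∘ pick ∘ g)]

end Ring

theorem stmt11_general {k n : ℕ} (hn : 3 ≤ n)
    (g : Fin k → ZMod n)
    (r l : ZMod n → ZMod n)
    (hr : ∀ v : ZMod n, v ∉ Set.range g → firstMarkedFwd n g v (r v))
    (hl : ∀ v : ZMod n, v ∉ Set.range g → firstMarkedBwd n g v (l v)) :
    (∀ (d : ℕ) (v : ZMod n), v ∉ Set.range g →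
      Mark.toSet (mu (biRing n hn) g (d + 1) v) =
        {dst [mu (biRing n hn) g d v, mu (biRing n hn) g d (r v)],
         dst [mu (biRing n hn) g d v, mu (biRing n hn) g d (l v)]}) ∧
    (∀ (d : ℕ) (u v : ZMod n), u ∉ Set.range g → v ∉ Set.range g →
      r u = r v → l u = l v →
      mu (biRing n hn) g d u = mu (biRing n hn) g d v) ∧
    (∀ d : ℕ, (Set.range (mu (biRing n hn) g d)).ncard ≤ 2 * k) :=
  ⟨fun d _ hv => toSet_mu_succ_biRing hr hl hn (mu_biRing_eq_of_ends_eq hr hl hn d) hv,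
    mu_biRing_eq_of_ends_eq hr hl hn, ncard_range_mu_biRing_le hr hl hn⟩

/-- in the bi-directional ring of size `n ≥ 3`, with `r v` / `l v`
the first marked vertices clockwise / counter-clockwise from `v`, for `d ≥ 1`
(written `d + 1`) and unmarked `v`,
`μ_{d+1}(v) = { destutter [μ_d(v), μ_d(r v)], destutter [μ_d(v), μ_d(l v)] }`;
unmarked vertices with the same `r`- and `l`-values have equal markings at every
level; and the number of `∼_d`-classes is at most `2k`. -/
theorem stmt11 {k n : ℕ} (hk : 1 ≤ k) (hn : 3 ≤ n) (hkn : k ≤ n)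
    (g : Fin k → ZMod n) (hg : Function.Injective g)
    (r l : ZMod n → ZMod n)
    (hr : ∀ v : ZMod n, v ∉ Set.range g → firstMarkedFwd n g v (r v))
    (hl : ∀ v : ZMod n, v ∉ Set.range g → firstMarkedBwd n g v (l v)) :
    (∀ (d : ℕ) (v : ZMod n), v ∉ Set.range g →
      Mark.toSet (mu (biRing n hn) g (d + 1) v) =
        {dst [mu (biRing n hn) g d v, mu (biRing n hn) g d (r v)],
         dst [mu (biRing n hn) g d v, mu (biRing n hn) g d (l v)]}) ∧
    (∀ (d : ℕ) (u v : ZMod n), u ∉ Set.range g → v ∉ Set.range g →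
      r u = r v → l u = l v →
      mu (biRing n hn) g d u = mu (biRing n hn) g d v) ∧
    (∀ d : ℕ, (Set.range (mu (biRing n hn) g d)).ncard ≤ 2 * k) :=
  stmt11_general hn g r l hr hl
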